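/- arXiv:0811.0951 — 3 statements merged into one kernel-verified Lean document; each statement's English description precedes it below -/
import Mathlib

section
/- Let a, b, c > 0 and p < q < r be real numbers, and let f(u) = -a u^p + b u^q - c u^r for u > 0. Then f has exactly one zero on (0,∞) if and only if a = b · ((r-q)/(r-p)) · (b(q-p)/(c(r-p)))^{(q-p)/(r-q)}; moreover in that case f(u) ≤ 0 for all u > 0, with equality exactly at u = (b(q-p)/(c(r-p)))^{1/(r-q)}. -/
/-!
Write `f u = u ^ p * (g u - a)` with `g u = b * u ^ (q - p) - c * u ^ (r - p)`. Weighted AM-GM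
shows that `g` attains its maximum `T` at `w = (b(q-p)/(c(r-p)))^{1/(r-q)}` and nowhere else, so
`f` has no zero if `a > T` and the single zero `w` if `a = T`. If `0 < a < T`, then since `g`
tends to `0` at `0⁺` and is negative for large `u`, the intermediate value theorem gives a zero
on each side of `w`.
-/

open Real Set Filter Topology

noncomputable def twoPower (b c s t u : ℝ) : ℝ := b * u ^ s - c * u ^ t

noncomputable def twoPowerArgmax (b c s t : ℝ) : ℝ := (b * s / (c * t)) ^ (1 / (t - s))

noncomputable def twoPowerMax (b c s t : ℝ) : ℝ :=
  b * ((t - s) / t) * (b * s / (c * t)) ^ (s / (t - s))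

section TwoPower

variable {a b c s t u : ℝ}

lemma twoPowerArgmax_pos (hb : 0 < b) (hc : 0 < c) (hs : 0 < s) (hst : s < t) :
    0 < twoPowerArgmax b c s t :=
  rpow_pos_of_pos (by have := hs.trans hst; positivity) _

lemma twoPowerArgmax_rpow_sub (hb : 0 < b) (hc : 0 < c) (hs : 0 < s) (hst : s < t) :
    twoPowerArgmax b c s t ^ (t - s) = b * s / (c * t) := by
  rw [twoPowerArgmax, ← rpow_mul (by have := hs.trans hst; positivity),
    one_div_mul_cancel (sub_pos.2 hst).ne', rpow_one]

/-- After the substitution `y = (u / w) ^ t`, with `w` the maximiser, `twoPower` becomes a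
multiple of `y ^ θ - θ * y` with `θ = s / t`, whose maximum over `y > 0` is weighted AM-GM. -/
lemma twoPower_eq_mul_sub (hb : 0 < b) (hc : 0 < c) (hs : 0 < s) (hst : s < t) (hu : 0 < u) :
    twoPower b c s t u = b * twoPowerArgmax b c s t ^ s *
      (((u / twoPowerArgmax b c s t) ^ t) ^ (s / t) -
        s / t * (u / twoPowerArgmax b c s t) ^ t) := by
  set w := twoPowerArgmax b c s t
  have ht : 0 < t := hs.trans hst
  have hw : 0 < w := twoPowerArgmax_pos hb hc hs hst
  have huw : 0 ≤ u / w := (div_pos hu hw).le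
  have hws : w ^ t = w ^ s * (b * s / (c * t)) := by
    rw [← twoPowerArgmax_rpow_sub hb hc hs hst, ← rpow_add hw, add_sub_cancel]
  rw [twoPower, ← rpow_mul huw, mul_div_cancel₀ _ ht.ne', div_rpow hu.le hw.le,
    div_rpow hu.le hw.le, hws]
  field_simp

lemma twoPowerMax_eq_mul (hb : 0 < b) (hc : 0 < c) (hs : 0 < s) (hst : s < t) :
    twoPowerMax b c s t = b * twoPowerArgmax b c s t ^ s * (1 - s / t) := by
  have ht : 0 < t := hs.trans hst
  rw [twoPowerMax, twoPowerArgmax, ← rpow_mul (by positivity), one_div_mul_eq_div]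
  field_simp

lemma twoPower_lt_max (hb : 0 < b) (hc : 0 < c) (hs : 0 < s) (hst : s < t) (hu : 0 < u)
    (hne : u ≠ twoPowerArgmax b c s t) : twoPower b c s t u < twoPowerMax b c s t := by
  have ht : 0 < t := hs.trans hst
  have hw := twoPowerArgmax_pos hb hc hs hst
  have hy : (u / twoPowerArgmax b c s t) ^ t ≠ 1 := by
    rwa [← one_rpow t, Ne, rpow_left_inj (div_pos hu hw).le zero_le_one ht.ne',
      div_eq_one_iff_eq hw.ne']
  have amgm := (geom_mean_lt_arith_mean2_weighted_iff_of_pos (div_pos hs ht)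
    (sub_pos.2 ((div_lt_one ht).2 hst)) (by positivity) zero_le_one (add_sub_cancel _ _)).2 hy
  rw [one_rpow, mul_one, mul_one] at amgm
  rw [twoPower_eq_mul_sub hb hc hs hst hu, twoPowerMax_eq_mul hb hc hs hst]
  exact mul_lt_mul_of_pos_left (by linarith) (mul_pos hb (rpow_pos_of_pos hw s))

lemma twoPower_argmax (hb : 0 < b) (hc : 0 < c) (hs : 0 < s) (hst : s < t) :
    twoPower b c s t (twoPowerArgmax b c s t) = twoPowerMax b c s t := by
  rw [twoPower_eq_mul_sub hb hc hs hst (twoPowerArgmax_pos hb hc hs hst),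
    div_self (twoPowerArgmax_pos hb hc hs hst).ne', one_rpow, one_rpow, mul_one,
    twoPowerMax_eq_mul hb hc hs hst]

lemma twoPower_le_max (hb : 0 < b) (hc : 0 < c) (hs : 0 < s) (hst : s < t) (hu : 0 < u) :
    twoPower b c s t u ≤ twoPowerMax b c s t := by
  rcases eq_or_ne u (twoPowerArgmax b c s t) with rfl | hne
  · exact (twoPower_argmax hb hc hs hst).le
  · exact (twoPower_lt_max hb hc hs hst hu hne).le

lemma twoPower_eq_max_iff (hb : 0 < b) (hc : 0 < c) (hs : 0 < s) (hst : s < t) (hu : 0 < u) :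
    twoPower b c s t u = twoPowerMax b c s t ↔ u = twoPowerArgmax b c s t := by
  refine ⟨fun h => ?_, fun h => h ▸ twoPower_argmax hb hc hs hst⟩
  by_contra hne
  exact (twoPower_lt_max hb hc hs hst hu hne).ne h

lemma continuousOn_twoPower : ContinuousOn (twoPower b c s t) (Ioi 0) := by
  unfold twoPower
  have hrpow (e : ℝ) : ContinuousOn (· ^ e) (Ioi (0 : ℝ)) :=
    continuousOn_id.rpow_const fun x hx => Or.inl (ne_of_gt hx)
  exact (continuousOn_const.mul (hrpow s)).sub (continuousOn_const.mul (hrpow t))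

lemma exists_mem_Ioo_twoPower_lt (hc : 0 < c) (hs : 0 < s) (ha : 0 < a) {v : ℝ} (hv : 0 < v) :
    ∃ u ∈ Ioo 0 v, twoPower b c s t u < a := by
  have hlim : Tendsto (fun u => b * u ^ s) (𝓝[>] 0) (𝓝 0) := by
    have : ContinuousAt (fun u : ℝ => b * u ^ s) 0 :=
      continuousAt_const.mul (continuousAt_rpow_const 0 s (Or.inr hs.le))
    simpa [zero_rpow hs.ne'] using this.tendsto.mono_left nhdsWithin_le_nhds
  obtain ⟨u, hlt, hu⟩ := ((hlim.eventually (gt_mem_nhds ha)).and (Ioo_mem_nhdsGT hv)).exists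
  refine ⟨u, hu, ?_⟩
  have : 0 < c * u ^ t := mul_pos hc (rpow_pos_of_pos hu.1 t)
  rw [twoPower]
  linarith

lemma exists_gt_twoPower_lt (hc : 0 < c) (hst : s < t) (ha : 0 < a) (v : ℝ) :
    ∃ u > v, twoPower b c s t u < a := by
  have hlarge : ∀ᶠ u in atTop, b / c < u ^ (t - s) :=
    (tendsto_rpow_atTop (sub_pos.2 hst)).eventually (eventually_gt_atTop _)
  obtain ⟨u, hbu, hvu, hu⟩ :=
    (hlarge.and ((eventually_gt_atTop v).and (eventually_gt_atTop 0))).exists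
  refine ⟨u, hvu, ?_⟩
  have hsplit : u ^ t = u ^ (t - s) * u ^ s := by rw [← rpow_add hu, sub_add_cancel]
  have hb : b < c * u ^ (t - s) := (div_lt_iff₀' hc).1 hbu
  have : 0 < u ^ s := rpow_pos_of_pos hu s
  rw [twoPower, hsplit]
  nlinarith

lemma exists_lt_twoPower_eq_twoPower_eq (hb : 0 < b) (hc : 0 < c) (hs : 0 < s) (hst : s < t)
    (ha : 0 < a) (haT : a < twoPowerMax b c s t) :
    ∃ x y, 0 < x ∧ x < y ∧ twoPower b c s t x = a ∧ twoPower b c s t y = a := by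
  set w := twoPowerArgmax b c s t
  have hw : 0 < w := twoPowerArgmax_pos hb hc hs hst
  have hgw : twoPower b c s t w = twoPowerMax b c s t := twoPower_argmax hb hc hs hst
  obtain ⟨x₀, ⟨hx₀, hx₀w⟩, hgx₀⟩ :=
    exists_mem_Ioo_twoPower_lt (b := b) (t := t) hc hs ha hw
  obtain ⟨y₀, hwy₀, hgy₀⟩ := exists_gt_twoPower_lt (b := b) hc hst ha w
  obtain ⟨x, hx, hgx⟩ := intermediate_value_Icc hx₀w.le
    (continuousOn_twoPower.mono fun z hz => hx₀.trans_le hz.1) ⟨hgx₀.le, hgw ▸ haT.le⟩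
  obtain ⟨y, hy, hgy⟩ := intermediate_value_Icc' hwy₀.le
    (continuousOn_twoPower.mono fun z hz => hw.trans_le hz.1) ⟨hgy₀.le, hgw ▸ haT.le⟩
  have hxw : x ≠ w := by rintro rfl; exact haT.ne (hgw ▸ hgx).symm
  exact ⟨x, y, hx₀.trans_le hx.1, (lt_of_le_of_ne hx.2 hxw).trans_le hy.1, hgx, hgy⟩

lemma existsUnique_twoPower_eq_iff (hb : 0 < b) (hc : 0 < c) (hs : 0 < s) (hst : s < t)
    (ha : 0 < a) : (∃! u, 0 < u ∧ twoPower b c s t u = a) ↔ a = twoPowerMax b c s t := by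
  refine ⟨fun ⟨u, ⟨hu, hgu⟩, huniq⟩ => ?_, fun haT => ?_⟩
  · rcases lt_trichotomy a (twoPowerMax b c s t) with hlt | heq | hgt
    · obtain ⟨x, y, hx, hxy, hgx, hgy⟩ := exists_lt_twoPower_eq_twoPower_eq hb hc hs hst ha hlt
      exact absurd ((huniq x ⟨hx, hgx⟩).trans (huniq y ⟨hx.trans hxy, hgy⟩).symm) hxy.ne
    · exact heq
    · exact absurd (hgu ▸ twoPower_le_max hb hc hs hst hu) hgt.not_ge
  · refine ⟨twoPowerArgmax b c s t,
      ⟨twoPowerArgmax_pos hb hc hs hst, haT ▸ twoPower_argmax hb hc hs hst⟩, ?_⟩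
    rintro u ⟨hu, hgu⟩
    exact (twoPower_eq_max_iff hb hc hs hst hu).1 (hgu.trans haT)

end TwoPower

lemma neg_mul_rpow_add_mul_rpow_sub_mul_rpow {a b c p q r u : ℝ} (hu : 0 < u) :
    -a * u ^ p + b * u ^ q - c * u ^ r = u ^ p * (twoPower b c (q - p) (r - p) u - a) := by
  have hsplit (e : ℝ) : u ^ e = u ^ p * u ^ (e - p) := by rw [← rpow_add hu, add_sub_cancel]
  rw [twoPower, hsplit q, hsplit r]
  ring

/-- `f` has exactly one zero on `(0,∞)` iff `a` equals the critical
threshold; and in that case `f ≤ 0` on `(0,∞)` with equality exactly at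
`u = (b(q-p)/(c(r-p)))^{1/(r-q)}`. -/
theorem stmt_3 (a b c p q r : ℝ) (ha : 0 < a) (hb : 0 < b) (hc : 0 < c)
    (hpq : p < q) (hqr : q < r)
    (f : ℝ → ℝ) (hf : f = fun u : ℝ => -a * u ^ p + b * u ^ q - c * u ^ r) :
    ((∃! u : ℝ, 0 < u ∧ f u = 0) ↔
      a = b * ((r - q) / (r - p)) *
        (b * (q - p) / (c * (r - p))) ^ ((q - p) / (r - q))) ∧
    (a = b * ((r - q) / (r - p)) *
        (b * (q - p) / (c * (r - p))) ^ ((q - p) / (r - q)) →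
      ∀ u : ℝ, 0 < u →
        f u ≤ 0 ∧
        (f u = 0 ↔ u = (b * (q - p) / (c * (r - p))) ^ (1 / (r - q)))) := by
  have hs : 0 < q - p := sub_pos.2 hpq
  have hst : q - p < r - p := sub_lt_sub_right hqr p
  have hexp : r - p - (q - p) = r - q := by ring
  have hT : twoPowerMax b c (q - p) (r - p) =
      b * ((r - q) / (r - p)) * (b * (q - p) / (c * (r - p))) ^ ((q - p) / (r - q)) := by
    rw [twoPowerMax, hexp]
  have hw : twoPowerArgmax b c (q - p) (r - p) = (b * (q - p) / (c * (r - p))) ^ (1 / (r - q)) := by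
    rw [twoPowerArgmax, hexp]
  have hfu (u : ℝ) (hu : 0 < u) : f u = u ^ p * (twoPower b c (q - p) (r - p) u - a) := by
    subst hf
    exact neg_mul_rpow_add_mul_rpow_sub_mul_rpow hu
  have hzero (u : ℝ) (hu : 0 < u) : f u = 0 ↔ twoPower b c (q - p) (r - p) u = a := by
    rw [hfu u hu, mul_eq_zero, sub_eq_zero, or_iff_right (rpow_pos_of_pos hu p).ne']
  refine ⟨?_, fun haT u hu => ⟨?_, ?_⟩⟩
  · rw [← hT, ← existsUnique_twoPower_eq_iff hb hc hs hst ha]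
    exact existsUnique_congr fun u => and_congr_right (hzero u)
  · rw [hfu u hu]
    exact mul_nonpos_of_nonneg_of_nonpos (rpow_nonneg hu.le p)
      (sub_nonpos.2 (haT ▸ hT ▸ twoPower_le_max hb hc hs hst hu))
  · rw [hzero u hu, haT, ← hT, ← hw]
    exact twoPower_eq_max_iff hb hc hs hst hu
end

section
/- Let a, b, c > 0 and p < q < r be real numbers, let f(u) = -a u^p + b u^q - c u^r for u > 0, and let f̃(u) = (u f'(u))' f(u) - u f'(u)^2. Then f has exactly one zero on (0,∞) if and only if f̃ has exactly one zero on (0,∞). -/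
/-!
Both `f` and `u * f̃ u` are trinomials `-A u^P + B u^Q - C u^R` with `A, B, C > 0` and `P < Q < R`;
indeed `u f̃(u) = -ab(q-p)² u^(p+q) + ac(r-p)² u^(p+r) - bc(r-q)² u^(q+r)`.
Such a trinomial vanishes at `u > 0` iff `B u^s - C u^t = A` with `s = Q - P < t = R - P`. The left
side increases from `0` up to its maximum at the critical point and then decreases to `-∞`, so the
root is unique iff `A` equals that maximum, i.e. iff
`A^(R-Q) C^(Q-P) (R-P)^(R-P) = B^(R-P) (R-Q)^(R-Q) (Q-P)^(Q-P)`.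
For the coefficients of `u f̃` this condition reduces, after cancelling common factors, to the one
for `f`.
-/

open Real Set Filter Topology

theorem existsUnique_pos_eq_iff_of_unimodal {φ : ℝ → ℝ} {u₀ A : ℝ}
    (hcont : ContinuousOn φ (Ioi 0)) (hmono : StrictMonoOn φ (Ioc 0 u₀))
    (hanti : StrictAntiOn φ (Ici u₀)) (hleft : ∃ x ∈ Ioo 0 u₀, φ x < A)
    (hright : ∃ x, u₀ < x ∧ φ x < A) :
    (∃! u, 0 < u ∧ φ u = A) ↔ φ u₀ = A := by
  obtain ⟨x, ⟨hx₀, hxu₀⟩, hxA⟩ := hleft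
  obtain ⟨y, hu₀y, hyA⟩ := hright
  have hu₀ : 0 < u₀ := hx₀.trans hxu₀
  have hlt_peak : ∀ v, 0 < v → v ≠ u₀ → φ v < φ u₀ := fun v hv hne =>
    hne.lt_or_gt.elim (fun h => hmono ⟨hv, h.le⟩ ⟨hu₀, le_rfl⟩ h)
      (fun h => hanti (mem_Ici.2 le_rfl) (mem_Ici.2 h.le) h)
  constructor
  · rintro ⟨u, ⟨hu, rfl⟩, huniq⟩
    by_contra hne
    have hpeak : φ u < φ u₀ := hlt_peak u hu fun h => hne (h ▸ rfl)
    -- `φ u` is attained once on each side of the peak.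
    obtain ⟨v, hv, hvu⟩ := intermediate_value_Icc hxu₀.le
      (hcont.mono fun z hz => hx₀.trans_le hz.1) ⟨hxA.le, hpeak.le⟩
    obtain ⟨w, hw, hwu⟩ := intermediate_value_Icc' hu₀y.le
      (hcont.mono fun z hz => hu₀.trans_le hz.1) ⟨hyA.le, hpeak.le⟩
    have hvw : v < w := (hv.2.lt_of_ne fun h => by subst h; exact hpeak.ne' hvu).trans_le hw.1
    exact hvw.ne ((huniq v ⟨hx₀.trans_le hv.1, hvu⟩).trans (huniq w ⟨hu₀.trans_le hw.1, hwu⟩).symm)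
  · intro hA
    refine ⟨u₀, ⟨hu₀, hA⟩, fun v ⟨hv, hvA⟩ => ?_⟩
    by_contra hne
    exact (hlt_peak v hv hne).ne (hvA.trans hA.symm)

section RpowSubRpow

variable {B C s t : ℝ}

theorem continuous_rpow_sub_rpow (hs : 0 ≤ s) (ht : 0 ≤ t) :
    Continuous fun u : ℝ => B * u ^ s - C * u ^ t :=
  (continuous_const.mul (continuous_rpow_const hs)).sub
    (continuous_const.mul (continuous_rpow_const ht))

theorem rpow_sub_rpow_eq_rpow_mul {x : ℝ} (hx : 0 < x) :
    B * x ^ s - C * x ^ t = x ^ s * (B - C * x ^ (t - s)) := by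
  rw [mul_sub, ← mul_assoc, mul_comm (x ^ s) C, mul_assoc, ← rpow_add hx, add_sub_cancel,
    mul_comm]

theorem hasDerivAt_rpow_sub_rpow {x : ℝ} (hx : 0 < x) :
    HasDerivAt (fun u => B * u ^ s - C * u ^ t)
      (x ^ (s - 1) * (s * B - t * C * x ^ (t - s))) x := by
  refine (((hasDerivAt_rpow_const (p := s) (Or.inl hx.ne')).const_mul B).sub
    ((hasDerivAt_rpow_const (p := t) (Or.inl hx.ne')).const_mul C)).congr_deriv ?_
  rw [show t - 1 = (s - 1) + (t - s) by ring, rpow_add hx]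
  ring

noncomputable def rpowSubRpowPeak (B C s t : ℝ) : ℝ := (s * B / (t * C)) ^ (t - s)⁻¹

theorem rpowSubRpowPeak_pos (hB : 0 < B) (hC : 0 < C) (hs : 0 < s) (hst : s < t) :
    0 < rpowSubRpowPeak B C s t := by
  unfold rpowSubRpowPeak
  have := hs.trans hst
  positivity

theorem strictMonoOn_rpow_sub_rpow (hB : 0 < B) (hC : 0 < C) (hs : 0 < s) (hst : s < t) :
    StrictMonoOn (fun u => B * u ^ s - C * u ^ t) (Ioc 0 (rpowSubRpowPeak B C s t)) := by
  have ht : 0 < t := hs.trans hst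
  refine strictMonoOn_of_hasDerivWithinAt_pos (convex_Ioc _ _)
    (continuous_rpow_sub_rpow hs.le ht.le).continuousOn
    (fun x hx => (hasDerivAt_rpow_sub_rpow (interior_subset hx).1).hasDerivWithinAt) ?_
  intro x hx
  rw [interior_Ioc] at hx
  obtain ⟨hx, hxpeak⟩ := hx
  have hpow : x ^ (t - s) < s * B / (t * C) :=
    (lt_rpow_inv_iff_of_pos hx.le (by positivity) (sub_pos.2 hst)).1 hxpeak
  rw [lt_div_iff₀ (by positivity)] at hpow
  exact mul_pos (rpow_pos_of_pos hx _) (by linarith)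

theorem strictAntiOn_rpow_sub_rpow (hB : 0 < B) (hC : 0 < C) (hs : 0 < s) (hst : s < t) :
    StrictAntiOn (fun u => B * u ^ s - C * u ^ t) (Ici (rpowSubRpowPeak B C s t)) := by
  have ht : 0 < t := hs.trans hst
  have hpeak := (rpowSubRpowPeak_pos hB hC hs hst).le
  refine strictAntiOn_of_hasDerivWithinAt_neg (convex_Ici _)
    (continuous_rpow_sub_rpow hs.le ht.le).continuousOn
    (fun x hx => (hasDerivAt_rpow_sub_rpow
      (hpeak.trans_lt (interior_Ici.subset hx))).hasDerivWithinAt) ?_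
  intro x hx
  rw [interior_Ici] at hx
  have hx₀ : 0 < x := hpeak.trans_lt hx
  have hpow : s * B / (t * C) < x ^ (t - s) :=
    (rpow_inv_lt_iff_of_pos (by positivity) hx₀.le (sub_pos.2 hst)).1 hx
  rw [div_lt_iff₀ (by positivity)] at hpow
  exact mul_neg_of_pos_of_neg (rpow_pos_of_pos hx₀ _) (by linarith)

theorem rpow_sub_rpow_rpowSubRpowPeak (hB : 0 < B) (hC : 0 < C) (hs : 0 < s) (hst : s < t) :
    B * rpowSubRpowPeak B C s t ^ s - C * rpowSubRpowPeak B C s t ^ t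
      = B * rpowSubRpowPeak B C s t ^ s * ((t - s) / t) := by
  have ht : 0 < t := hs.trans hst
  rw [rpow_sub_rpow_eq_rpow_mul (rpowSubRpowPeak_pos hB hC hs hst), rpowSubRpowPeak,
    rpow_inv_rpow (by positivity) (sub_pos.2 hst).ne']
  field_simp

theorem log_rpowSubRpowPeak (hB : 0 < B) (hC : 0 < C) (hs : 0 < s) (hst : s < t) :
    (t - s) * log (rpowSubRpowPeak B C s t) = log s + log B - log t - log C := by
  have ht : 0 < t := hs.trans hst
  rw [rpowSubRpowPeak, log_rpow (by positivity), ← mul_assoc, mul_inv_cancel₀ (sub_pos.2 hst).ne',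
    one_mul, log_div (by positivity) (by positivity), log_mul hs.ne' hB.ne',
    log_mul ht.ne' hC.ne']
  ring

theorem exists_gt_rpow_sub_rpow_neg (hB : 0 ≤ B) (hC : 0 < C) (hst : s < t) (y : ℝ) :
    ∃ x, y < x ∧ B * x ^ s - C * x ^ t < 0 := by
  set x := max y ((B / C) ^ (t - s)⁻¹) + 1
  have hx : (B / C) ^ (t - s)⁻¹ < x := by linarith [le_max_right y ((B / C) ^ (t - s)⁻¹)]
  have hx₀ : 0 < x := by positivity
  refine ⟨x, by linarith [le_max_left y ((B / C) ^ (t - s)⁻¹)], ?_⟩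
  have hpow : B / C < x ^ (t - s) :=
    (rpow_inv_lt_iff_of_pos (by positivity) hx₀.le (sub_pos.2 hst)).1 hx
  rw [div_lt_iff₀ hC] at hpow
  rw [rpow_sub_rpow_eq_rpow_mul hx₀]
  exact mul_neg_of_pos_of_neg (rpow_pos_of_pos hx₀ _) (by linarith)

theorem existsUnique_rpow_sub_rpow_eq_iff {A : ℝ} (hA : 0 < A) (hB : 0 < B) (hC : 0 < C)
    (hs : 0 < s) (hst : s < t) :
    (∃! u, 0 < u ∧ B * u ^ s - C * u ^ t = A) ↔
      (t - s) * log A + s * log C + t * log t = t * log B + (t - s) * log (t - s) + s * log s := by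
  have ht : 0 < t := hs.trans hst
  have hts : 0 < t - s := sub_pos.2 hst
  set u₀ := rpowSubRpowPeak B C s t
  have hu₀ : 0 < u₀ := rpowSubRpowPeak_pos hB hC hs hst
  have hcont := continuous_rpow_sub_rpow (B := B) (C := C) hs.le ht.le
  have hleft : ∃ x ∈ Ioo 0 u₀, B * x ^ s - C * x ^ t < A := by
    have hlim : Tendsto (fun u : ℝ => B * u ^ s - C * u ^ t) (𝓝[>] 0) (𝓝 0) := by
      have := hcont.tendsto 0
      simp only [zero_rpow hs.ne', zero_rpow ht.ne', mul_zero, sub_zero] at this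
      exact this.mono_left nhdsWithin_le_nhds
    exact ((show ∀ᶠ x in 𝓝[>] (0 : ℝ), x ∈ Ioo 0 u₀ from Ioo_mem_nhdsGT hu₀).and
      (hlim.eventually_lt_const hA)).exists
  have hright : ∃ x, u₀ < x ∧ B * x ^ s - C * x ^ t < A := by
    obtain ⟨x, hx, hneg⟩ := exists_gt_rpow_sub_rpow_neg hB.le hC hst u₀
    exact ⟨x, hx, hneg.trans hA⟩
  rw [existsUnique_pos_eq_iff_of_unimodal hcont.continuousOn
      (strictMonoOn_rpow_sub_rpow hB hC hs hst) (strictAntiOn_rpow_sub_rpow hB hC hs hst)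
      hleft hright,
    rpow_sub_rpow_rpowSubRpowPeak hB hC hs hst,
    ← log_injOn_pos.eq_iff (show 0 < B * u₀ ^ s * ((t - s) / t) by positivity) hA,
    log_mul (by positivity) (div_pos hts ht).ne', log_mul hB.ne' (by positivity),
    log_rpow hu₀, log_div hts.ne' ht.ne']
  have hlog := log_rpowSubRpowPeak hB hC hs hst
  constructor
  · intro h
    linear_combination (s - t) * h + s * hlog
  · intro h
    refine mul_left_cancel₀ hts.ne' ?_
    linear_combination s * hlog - h

end RpowSubRpow

section Trinomial

variable {A B C P Q R : ℝ}

noncomputable def trinomial (A B C P Q R u : ℝ) : ℝ := -A * u ^ P + B * u ^ Q - C * u ^ R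

theorem trinomial_eq_zero_iff {u : ℝ} (hu : 0 < u) :
    trinomial A B C P Q R u = 0 ↔ B * u ^ (Q - P) - C * u ^ (R - P) = A := by
  have hfactor : trinomial A B C P Q R u = u ^ P * (B * u ^ (Q - P) - C * u ^ (R - P) - A) := by
    simp only [trinomial, rpow_sub hu]
    field_simp
    ring
  rw [hfactor, mul_eq_zero, or_iff_right (rpow_pos_of_pos hu P).ne', sub_eq_zero]

theorem existsUnique_trinomial_eq_zero_iff (hA : 0 < A) (hB : 0 < B) (hC : 0 < C)
    (hPQ : P < Q) (hQR : Q < R) :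
    (∃! u, 0 < u ∧ trinomial A B C P Q R u = 0) ↔
      (R - Q) * log A + (Q - P) * log C + (R - P) * log (R - P)
        = (R - P) * log B + (R - Q) * log (R - Q) + (Q - P) * log (Q - P) := by
  rw [existsUnique_congr fun u => and_congr_right fun hu => trinomial_eq_zero_iff hu,
    existsUnique_rpow_sub_rpow_eq_iff hA hB hC (sub_pos.2 hPQ) (sub_lt_sub_right hQR P),
    sub_sub_sub_cancel_right]

theorem hasDerivAt_trinomial {x : ℝ} (hx : 0 < x) :
    HasDerivAt (trinomial A B C P Q R) (trinomial (A * P) (B * Q) (C * R) P Q R x / x) x := by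
  refine ((((hasDerivAt_rpow_const (p := P) (Or.inl hx.ne')).const_mul (-A)).add
    ((hasDerivAt_rpow_const (p := Q) (Or.inl hx.ne')).const_mul B)).sub
    ((hasDerivAt_rpow_const (p := R) (Or.inl hx.ne')).const_mul C)).congr_deriv ?_
  simp only [trinomial, rpow_sub_one hx.ne']
  ring

end Trinomial

noncomputable def tilde (f : ℝ → ℝ) (u : ℝ) : ℝ :=
  deriv (fun v => v * deriv f v) u * f u - u * deriv f u ^ 2

theorem mul_tilde_trinomial {a b c p q r u : ℝ} (hu : 0 < u) :
    u * tilde (trinomial a b c p q r) u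
      = trinomial (a * b * (q - p) ^ 2) (a * c * (r - p) ^ 2) (b * c * (r - q) ^ 2)
          (p + q) (p + r) (q + r) u := by
  have hmul_deriv : ∀ {A B C x : ℝ}, 0 < x →
      x * deriv (trinomial A B C p q r) x = trinomial (A * p) (B * q) (C * r) p q r x :=
    fun hx => by rw [(hasDerivAt_trinomial hx).deriv, mul_div_cancel₀ _ hx.ne']
  have hderiv : deriv (fun v => v * deriv (trinomial a b c p q r) v) u
      = trinomial (a * p * p) (b * q * q) (c * r * r) p q r u / u := by
    rw [Filter.EventuallyEq.deriv_eq (f := trinomial (a * p) (b * q) (c * r) p q r)]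
    · exact (hasDerivAt_trinomial hu).deriv
    · filter_upwards [Ioi_mem_nhds hu] with v hv using hmul_deriv hv
  rw [tilde, hderiv, (hasDerivAt_trinomial hu).deriv]
  simp only [trinomial, rpow_add hu]
  field_simp
  ring

/-- `f` has exactly one zero on `(0,∞)` iff `f̃` has exactly one
zero on `(0,∞)`. -/
theorem stmt_6 (a b c p q r : ℝ) (ha : 0 < a) (hb : 0 < b) (hc : 0 < c)
    (hpq : p < q) (hqr : q < r)
    (f : ℝ → ℝ) (hf : f = fun u : ℝ => -a * u ^ p + b * u ^ q - c * u ^ r)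
    (ftilde : ℝ → ℝ)
    (hftilde : ftilde = fun u : ℝ =>
      deriv (fun v : ℝ => v * deriv f v) u * f u - u * (deriv f u) ^ 2) :
    (∃! u : ℝ, 0 < u ∧ f u = 0) ↔ (∃! u : ℝ, 0 < u ∧ ftilde u = 0) := by
  subst hf hftilde
  change (∃! u, 0 < u ∧ trinomial a b c p q r u = 0) ↔
    ∃! u, 0 < u ∧ tilde (trinomial a b c p q r) u = 0
  have htilde_eq_zero : ∀ u, 0 < u → (tilde (trinomial a b c p q r) u = 0 ↔
      trinomial (a * b * (q - p) ^ 2) (a * c * (r - p) ^ 2) (b * c * (r - q) ^ 2)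
        (p + q) (p + r) (q + r) u = 0) := fun u hu => by
    rw [← mul_tilde_trinomial hu, mul_eq_zero, or_iff_right hu.ne']
  have hlog : ∀ {x y z : ℝ}, 0 < x → 0 < y → 0 < z → log (x * y * z ^ 2) = log x + log y + 2 * log z :=
    fun hx hy hz => by
      rw [log_mul (by positivity) (by positivity), log_mul hx.ne' hy.ne', log_pow, Nat.cast_ofNat]
  have hqp : 0 < q - p := sub_pos.2 hpq
  have hrq : 0 < r - q := sub_pos.2 hqr
  have hrp : 0 < r - p := hqp.trans (by linarith)
  rw [existsUnique_congr fun u => and_congr_right (htilde_eq_zero u),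
    existsUnique_trinomial_eq_zero_iff ha hb hc hpq hqr,
    existsUnique_trinomial_eq_zero_iff (by positivity) (by positivity) (by positivity)
      (by linarith) (by linarith),
    show q + r - (p + r) = q - p by ring, show p + r - (p + q) = r - q by ring,
    show q + r - (p + q) = r - p by ring, hlog ha hb hqp, hlog ha hc hrp, hlog hb hc hrq]
  -- The two log-linear conditions differ exactly by a sign.
  constructor <;> intro h <;> linear_combination -h
end

section
/- Let ω > 0 and q > p > 1 be real numbers, and let F(u) = -(ω/2) u^2 + u^{p+1}/(p+1) - u^{q+1}/(q+1) for u > 0. Then F(u) < 0 for every u > 0 if and only if ω > ω_{p,q}, where ω_{p,q} = (2(q-p)/((p+1)(q-1))) · ((p-1)(q+1)/((p+1)(q-1)))^{(p-1)/(q-p)}. -/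
/-!
Writing `F u = u² (g u - ω/2)` with `g u = u^(p-1)/(p+1) - u^(q-1)/(q+1)`, the claim is that
`ω/2` exceeds `sup g`. Weighted AM–GM, in the form of the tangent bound
`u^a ≤ (a/b) t^(a-b) u^b + (1 - a/b) t^a` (equality at `u = t`), shows that this supremum is
`ω_{p,q}/2` and is attained at `t = A^(1/(q-p))`, `A = (p-1)(q+1)/((p+1)(q-1))`.
-/

open Real

theorem rpow_le_weighted_rpow_add_rpow {a b u t : ℝ} (ha : 0 ≤ a) (hab : a ≤ b) (hb : 0 < b)
    (hu : 0 ≤ u) (ht : 0 < t) :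
    u ^ a ≤ a / b * (t ^ (a - b) * u ^ b) + (1 - a / b) * t ^ a := by
  have hw : 0 ≤ 1 - a / b := sub_nonneg.2 ((div_le_one hb).2 hab)
  have hprod : (t ^ (a - b) * u ^ b) ^ (a / b) * (t ^ a) ^ (1 - a / b) = u ^ a := by
    rw [mul_rpow (by positivity) (by positivity), ← rpow_mul ht.le, ← rpow_mul hu,
      ← rpow_mul ht.le, mul_right_comm, ← rpow_add ht,
      show (a - b) * (a / b) + a * (1 - a / b) = 0 by field_simp; ring, rpow_zero, one_mul,
      mul_div_cancel₀ a hb.ne']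
  calc u ^ a = (t ^ (a - b) * u ^ b) ^ (a / b) * (t ^ a) ^ (1 - a / b) := hprod.symm
    _ ≤ _ := geom_mean_le_arith_mean2_weighted (by positivity) hw (by positivity)
        (by positivity) (by ring)

/-- `F u / u² + ω/2` for the antiderivative `F` of the double-power nonlinearity. -/
noncomputable def reducedPotential (p q u : ℝ) : ℝ :=
  u ^ (p - 1) / (p + 1) - u ^ (q - 1) / (q + 1)

noncomputable def reducedPotentialArgmax (p q : ℝ) : ℝ :=
  ((p - 1) * (q + 1) / ((p + 1) * (q - 1))) ^ (q - p)⁻¹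

noncomputable def omegaThreshold (p q : ℝ) : ℝ :=
  2 * (q - p) / ((p + 1) * (q - 1)) *
    ((p - 1) * (q + 1) / ((p + 1) * (q - 1))) ^ ((p - 1) / (q - p))

section

variable {p q : ℝ}

theorem reducedPotentialArgmax_pos (hp : 1 < p) (hpq : p < q) :
    0 < reducedPotentialArgmax p q := by
  unfold reducedPotentialArgmax
  have : 0 < q - 1 := by linarith
  apply rpow_pos_of_pos
  apply div_pos <;> apply mul_pos <;> linarith

theorem reducedPotentialArgmax_rpow_sub (hp : 1 < p) (hpq : p < q) :
    reducedPotentialArgmax p q ^ (q - p) = (p - 1) * (q + 1) / ((p + 1) * (q - 1)) := by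
  unfold reducedPotentialArgmax
  rw [← rpow_mul (by apply div_nonneg <;> apply mul_nonneg <;> linarith),
    inv_mul_cancel₀ (by linarith), rpow_one]

theorem omegaThreshold_eq (hp : 1 < p) (hpq : p < q) :
    omegaThreshold p q =
      2 * (q - p) / ((p + 1) * (q - 1)) * reducedPotentialArgmax p q ^ (p - 1) := by
  unfold omegaThreshold reducedPotentialArgmax
  rw [← rpow_mul (by apply div_nonneg <;> apply mul_nonneg <;> linarith), inv_mul_eq_div]

theorem reducedPotential_le (hp : 1 < p) (hpq : p < q) {u : ℝ} (hu : 0 ≤ u) :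
    reducedPotential p q u ≤ omegaThreshold p q / 2 := by
  set t := reducedPotentialArgmax p q
  have ht : 0 < t := reducedPotentialArgmax_pos hp hpq
  have hq1 : 0 < q - 1 := by linarith
  have htangent :=
    rpow_le_weighted_rpow_add_rpow (a := p - 1) (by linarith) (by linarith) hq1 hu ht
  -- `t ^ (p - q) = A⁻¹` makes the coefficient of `u ^ (q - 1)` in the bound exactly `1/(q+1)`.
  have ht_pow : t ^ ((p - 1) - (q - 1)) = (p + 1) * (q - 1) / ((p - 1) * (q + 1)) := by
    rw [show (p - 1) - (q - 1) = -(q - p) by ring, rpow_neg ht.le,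
      reducedPotentialArgmax_rpow_sub hp hpq, inv_div]
  rw [ht_pow] at htangent
  have hp1 : p - 1 ≠ 0 := by linarith
  have hq1' : q - 1 ≠ 0 := hq1.ne'
  have hbound :
      u ^ (p - 1) ≤ (p + 1) / (q + 1) * u ^ (q - 1) + (q - p) / (q - 1) * t ^ (p - 1) := by
    convert htangent using 1
    field_simp
    ring
  calc reducedPotential p q u
      ≤ ((p + 1) / (q + 1) * u ^ (q - 1) + (q - p) / (q - 1) * t ^ (p - 1)) / (p + 1) -
          u ^ (q - 1) / (q + 1) := by
        unfold reducedPotential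
        gcongr
    _ = omegaThreshold p q / 2 := by
        rw [omegaThreshold_eq hp hpq]
        field_simp
        ring

theorem reducedPotential_reducedPotentialArgmax (hp : 1 < p) (hpq : p < q) :
    reducedPotential p q (reducedPotentialArgmax p q) = omegaThreshold p q / 2 := by
  set t := reducedPotentialArgmax p q
  have ht : 0 < t := reducedPotentialArgmax_pos hp hpq
  have hq_pow : t ^ (q - 1) = t ^ (p - 1) * ((p - 1) * (q + 1) / ((p + 1) * (q - 1))) := by
    rw [← reducedPotentialArgmax_rpow_sub hp hpq, ← rpow_add ht]
    ring_nf
  have hp1 : p + 1 ≠ 0 := by linarith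
  have hq1 : q + 1 ≠ 0 := by linarith
  have hq1' : q - 1 ≠ 0 := by linarith
  rw [reducedPotential, omegaThreshold_eq hp hpq, hq_pow]
  field_simp
  ring

end

theorem antiderivative_eq_rpow_two_mul (ω p q : ℝ) {u : ℝ} (hu : 0 < u) :
    -(ω / 2) * u ^ (2 : ℝ) + u ^ (p + 1) / (p + 1) - u ^ (q + 1) / (q + 1) =
      u ^ (2 : ℝ) * (reducedPotential p q u - ω / 2) := by
  have hsplit (r : ℝ) : u ^ (r + 1) = u ^ (2 : ℝ) * u ^ (r - 1) := by
    rw [← rpow_add hu]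
    ring_nf
  rw [reducedPotential, hsplit p, hsplit q]
  ring

theorem stmt_17_general (ω p q : ℝ) (hp : 1 < p) (hpq : p < q)
    (F : ℝ → ℝ)
    (hF : F = fun u : ℝ =>
      -(ω / 2) * u ^ (2 : ℝ) + u ^ (p + 1) / (p + 1) - u ^ (q + 1) / (q + 1)) :
    (∀ u : ℝ, 0 < u → F u < 0) ↔
      ω > 2 * (q - p) / ((p + 1) * (q - 1)) *
        ((p - 1) * (q + 1) / ((p + 1) * (q - 1))) ^ ((p - 1) / (q - p)) := by
  change _ ↔ omegaThreshold p q < ω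
  have hF_neg_iff : ∀ u, 0 < u → (F u < 0 ↔ reducedPotential p q u < ω / 2) := fun u hu => by
    subst hF
    beta_reduce
    rw [antiderivative_eq_rpow_two_mul ω p q hu, ← mul_zero (u ^ (2 : ℝ)),
      mul_lt_mul_iff_right₀ (rpow_pos_of_pos hu 2), sub_neg]
  constructor
  · intro hneg
    have ht := reducedPotentialArgmax_pos hp hpq
    have := (hF_neg_iff _ ht).1 (hneg _ ht)
    rw [reducedPotential_reducedPotentialArgmax hp hpq] at this
    linarith
  · intro hω u hu
    exact (hF_neg_iff u hu).2 (by linarith [reducedPotential_le hp hpq hu.le])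

/-- `F u < 0` for every `u > 0` iff `ω > ω_{p,q}`, where
`ω_{p,q} = (2(q-p)/((p+1)(q-1))) ((p-1)(q+1)/((p+1)(q-1)))^{(p-1)/(q-p)}`. -/
theorem stmt_17 (ω p q : ℝ) (hω : 0 < ω) (hp : 1 < p) (hpq : p < q)
    (F : ℝ → ℝ)
    (hF : F = fun u : ℝ =>
      -(ω / 2) * u ^ (2 : ℝ) + u ^ (p + 1) / (p + 1) - u ^ (q + 1) / (q + 1)) :
    (∀ u : ℝ, 0 < u → F u < 0) ↔
      ω > 2 * (q - p) / ((p + 1) * (q - 1)) *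
        ((p - 1) * (q + 1) / ((p + 1) * (q - 1))) ^ ((p - 1) / (q - p)) :=
  stmt_17_general ω p q hp hpq F hF
end
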